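/- arXiv:2001.05164 — 2 statements merged into one kernel-verified Lean document; each statement's English description precedes it below -/
import Mathlib

section
/- Let 𝒢 be a groupoid and let R be an object unital strongly 𝒢-graded ring, with the maps γ_σ defined from a fixed choice of elements u_σ^{(i)}, v_{σ⁻¹}^{(i)}. Let σ be a morphism, s ∈ Z(R_{d(σ)}) and t ∈ Z(R_{r(σ)}). If t r = r s for every r ∈ R_σ, then t = γ_σ(s). -/
open CategoryTheory

universe u v

/-- The type of all morphisms of a groupoid `𝒢`, bundled with their source and target. -/
abbrev Mor (𝒢 : Type u) [Groupoid 𝒢] : Type _ := Σ (e f : 𝒢), e ⟶ f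

/-- A grading of a (not necessarily unital) ring `R` by a groupoid `𝒢`:
`R` is the internal direct sum of additive subgroups `grade σ`, one for each
morphism `σ`, with `R_σ R_τ ⊆ R_{στ}` for composable pairs (note that the paper's
product `στ`, requiring `d(σ) = r(τ)`, is `τ ≫ σ` in categorical notation), and
`R_σ R_τ = 0` for non-composable pairs. -/
structure GroupoidGrading (𝒢 : Type u) [Groupoid 𝒢] (R : Type v) [NonUnitalRing R] where
  grade : ∀ ⦃e f : 𝒢⦄, (e ⟶ f) → AddSubgroup R
  decompose : ∀ r : R, ∃ (s : Finset (Mor 𝒢)) (c : Mor 𝒢 → R),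
    (∀ σ : Mor 𝒢, c σ ∈ grade σ.2.2) ∧ r = ∑ σ ∈ s, c σ
  indep : ∀ (s : Finset (Mor 𝒢)) (c : Mor 𝒢 → R),
    (∀ σ : Mor 𝒢, c σ ∈ grade σ.2.2) → (∑ σ ∈ s, c σ) = 0 → ∀ σ ∈ s, c σ = 0
  mul_mem : ∀ ⦃a b c : 𝒢⦄ (σ : b ⟶ c) (τ : a ⟶ b),
    ∀ x ∈ grade σ, ∀ y ∈ grade τ, x * y ∈ grade (τ ≫ σ)
  mul_eq_zero : ∀ ⦃a b b' c : 𝒢⦄ (σ : b ⟶ c) (τ : a ⟶ b'), b' ≠ b →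
    ∀ x ∈ grade σ, ∀ y ∈ grade τ, x * y = 0

/-- Object unitality data for a groupoid graded ring: a family of local identities
`one e ∈ R_e` such that `1_{R_{r(σ)}} x = x 1_{R_{d(σ)}} = x` for every homogeneous
`x ∈ R_σ` (in particular each `R_e` is a unital ring with identity `one e`). -/
structure ObjectUnital {𝒢 : Type u} [Groupoid 𝒢] {R : Type v} [NonUnitalRing R]
    (g : GroupoidGrading 𝒢 R) where
  one : 𝒢 → R
  one_mem : ∀ e : 𝒢, one e ∈ g.grade (𝟙 e)
  one_mul : ∀ ⦃e f : 𝒢⦄ (σ : e ⟶ f), ∀ x ∈ g.grade σ, one f * x = x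
  mul_one : ∀ ⦃e f : 𝒢⦄ (σ : e ⟶ f), ∀ x ∈ g.grade σ, x * one e = x
/-- The principal component `R_0 = ⊕_{e ∈ 𝒢₀} R_e` of a groupoid graded ring. -/
def R0 {𝒢 : Type u} [Groupoid 𝒢] {R : Type v} [NonUnitalRing R]
    (g : GroupoidGrading 𝒢 R) : AddSubgroup R :=
  ⨆ e : 𝒢, g.grade (𝟙 e)

/-- Membership in the center `Z(R_0)` of the principal component `R_0`. -/
def memZR0 {𝒢 : Type u} [Groupoid 𝒢] {R : Type v} [NonUnitalRing R]
    (g : GroupoidGrading 𝒢 R) (r : R) : Prop :=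
  r ∈ R0 g ∧ ∀ x ∈ R0 g, r * x = x * r

/-- Membership in the center `Z(R_e)` of the principal component `R_e`. -/
def memZRe {𝒢 : Type u} [Groupoid 𝒢] {R : Type v} [NonUnitalRing R]
    (g : GroupoidGrading 𝒢 R) (e : 𝒢) (r : R) : Prop :=
  r ∈ g.grade (𝟙 e) ∧ ∀ x ∈ g.grade (𝟙 e), r * x = x * r

/-- A fixed choice, for every morphism `σ`, of `n_σ ∈ ℕ` and elements
`u_σ^{(i)} ∈ R_σ`, `v_{σ⁻¹}^{(i)} ∈ R_{σ⁻¹}` (for `0 ≤ i < n_σ`) with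
`∑ u_σ^{(i)} v_{σ⁻¹}^{(i)} = 1_{R_{r(σ)}}`, normalized at identity morphisms by
`n_{𝟙 e} = 1` and `u_{𝟙 e}^{(0)} = v_{𝟙 e}^{(0)} = 1_{R_e}`. Such a choice exists
precisely because `R` is object unital and strongly `𝒢`-graded. -/
structure StrongChoice {𝒢 : Type u} [Groupoid 𝒢] {R : Type v} [NonUnitalRing R]
    (g : GroupoidGrading 𝒢 R) (U : ObjectUnital g) where
  n : ∀ ⦃e f : 𝒢⦄, (e ⟶ f) → ℕ
  uu : ∀ ⦃e f : 𝒢⦄, (e ⟶ f) → ℕ → R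
  vv : ∀ ⦃e f : 𝒢⦄, (e ⟶ f) → ℕ → R
  uu_mem : ∀ ⦃e f : 𝒢⦄ (σ : e ⟶ f) (i : ℕ), uu σ i ∈ g.grade σ
  vv_mem : ∀ ⦃e f : 𝒢⦄ (σ : e ⟶ f) (i : ℕ), vv σ i ∈ g.grade (Groupoid.inv σ)
  sum_eq : ∀ ⦃e f : 𝒢⦄ (σ : e ⟶ f),
    ∑ i ∈ Finset.range (n σ), uu σ i * vv σ i = U.one f
  n_id : ∀ e : 𝒢, n (𝟙 e) = 1
  uu_id : ∀ e : 𝒢, uu (𝟙 e) 0 = U.one e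
  vv_id : ∀ e : 𝒢, vv (𝟙 e) 0 = U.one e

/-- The additive map `γ_σ : R → R`, `γ_σ(r) = ∑_i u_σ^{(i)} r v_{σ⁻¹}^{(i)}`. -/
def StrongChoice.gam {𝒢 : Type u} [Groupoid 𝒢] {R : Type v} [NonUnitalRing R]
    {g : GroupoidGrading 𝒢 R} {U : ObjectUnital g} (C : StrongChoice g U)
    ⦃e f : 𝒢⦄ (σ : e ⟶ f) (r : R) : R :=
  ∑ i ∈ Finset.range (C.n σ), C.uu σ i * r * C.vv σ i

/-- Let `σ : e ⟶ f` be a morphism, `s ∈ Z(R_{d(σ)})` and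
`t ∈ Z(R_{r(σ)})`. If `t r = r s` for every `r ∈ R_σ`, then `t = γ_σ(s)`. -/
theorem stmt18 {𝒢 : Type u} [Groupoid 𝒢] {R : Type v} [NonUnitalRing R]
    (g : GroupoidGrading 𝒢 R) (U : ObjectUnital g) (C : StrongChoice g U)
    ⦃e f : 𝒢⦄ (σ : e ⟶ f) (s t : R)
    (hs : memZRe g e s) (ht : memZRe g f t)
    (h : ∀ r ∈ g.grade σ, t * r = r * s) :
    t = C.gam σ s := by
  have key : ∀ i, C.uu σ i * s * C.vv σ i = t * (C.uu σ i * C.vv σ i) := by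
    intro i
    rw [← h (C.uu σ i) (C.uu_mem σ i), mul_assoc]
  calc t = t * U.one f := (U.mul_one (𝟙 f) t ht.1).symm
    _ = t * ∑ i ∈ Finset.range (C.n σ), C.uu σ i * C.vv σ i := by rw [C.sum_eq σ]
    _ = ∑ i ∈ Finset.range (C.n σ), t * (C.uu σ i * C.vv σ i) := Finset.mul_sum _ _ _
    _ = C.gam σ s := by
        unfold StrongChoice.gam
        exact (Finset.sum_congr rfl fun i _ => key i).symm
end

section
/- Let 𝒢 be a groupoid and let R be an object unital strongly 𝒢-graded ring, with the maps γ_σ defined from a fixed choice of elements u_σ^{(i)}, v_{σ⁻¹}^{(i)}. Let ω and e be objects of 𝒢 such that the set 𝒢(ω,e) = {σ : d(σ) = ω and r(σ) = e} is nonempty and the principal group 𝒢(ω) = 𝒢(ω,ω) is finite (then 𝒢(ω,e) is finite as well). If r ∈ Z(R_ω) satisfies Σ_{ρ∈𝒢(ω)} γ_ρ(r) = 1_{R_ω}, then Σ_{σ∈𝒢(ω,e)} γ_σ(r) = 1_{R_e}. -/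
open CategoryTheory

universe u v

/-- Choice independence of `γ_σ` on central elements: for any finite family
`u j ∈ R_σ`, `v j ∈ R_{σ⁻¹}` with `∑ u j * v j = 1_{R_e}`, the sum `∑ u j * r * v j`
agrees with `γ_σ(r)` whenever `r ∈ Z(R_ω)`. -/
lemma indep_gam {𝒢 : Type u} [Groupoid 𝒢] {R : Type v} [NonUnitalRing R]
    {g : GroupoidGrading 𝒢 R} {U : ObjectUnital g} (C : StrongChoice g U)
    {ω e : 𝒢} (σ : ω ⟶ e) {ι : Type*} (s : Finset ι) (u v : ι → R)
    (hu : ∀ j ∈ s, u j ∈ g.grade σ) (hv : ∀ j ∈ s, v j ∈ g.grade (Groupoid.inv σ))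
    (hsum : ∑ j ∈ s, u j * v j = U.one e)
    (r : R) (hr : memZRe g ω r) :
    ∑ j ∈ s, u j * r * v j = C.gam σ r := by
  have hmem : ∀ j ∈ s, u j * r * v j ∈ g.grade (𝟙 e) := by
    intro j hj
    have h1 : u j * r ∈ g.grade σ := by
      have := g.mul_mem σ (𝟙 ω) (u j) (hu j hj) r hr.1
      simpa using this
    have := g.mul_mem σ (Groupoid.inv σ) (u j * r) h1 (v j) (hv j hj)
    simpa using this
  have key : ∀ j ∈ s, u j * r * v j
      = ∑ i ∈ Finset.range (C.n σ), (C.uu σ i * r * C.vv σ i) * (u j * v j) := by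
    intro j hj
    calc u j * r * v j = U.one e * (u j * r * v j) := (U.one_mul _ _ (hmem j hj)).symm
    _ = (∑ i ∈ Finset.range (C.n σ), C.uu σ i * C.vv σ i) * (u j * r * v j) := by
        rw [C.sum_eq]
    _ = ∑ i ∈ Finset.range (C.n σ), C.uu σ i * ((C.vv σ i * u j) * r) * v j := by
        rw [Finset.sum_mul]
        exact Finset.sum_congr rfl fun i _ => by simp [mul_assoc]
    _ = ∑ i ∈ Finset.range (C.n σ), C.uu σ i * (r * (C.vv σ i * u j)) * v j := by
        refine Finset.sum_congr rfl fun i _ => ?_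
        have hm : C.vv σ i * u j ∈ g.grade (𝟙 ω) := by
          have := g.mul_mem (Groupoid.inv σ) σ (C.vv σ i) (C.vv_mem σ i) (u j) (hu j hj)
          simpa using this
        rw [hr.2 _ hm]
    _ = ∑ i ∈ Finset.range (C.n σ), (C.uu σ i * r * C.vv σ i) * (u j * v j) := by
        exact Finset.sum_congr rfl fun i _ => by simp [mul_assoc]
  rw [Finset.sum_congr rfl key, Finset.sum_comm]
  unfold StrongChoice.gam
  refine Finset.sum_congr rfl fun i _ => ?_
  rw [← Finset.mul_sum, hsum]
  refine U.mul_one (𝟙 e) _ ?_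
  have h1 : C.uu σ i * r ∈ g.grade σ := by
    have := g.mul_mem σ (𝟙 ω) (C.uu σ i) (C.uu_mem σ i) r hr.1
    simpa using this
  have := g.mul_mem σ (Groupoid.inv σ) (C.uu σ i * r) h1 (C.vv σ i) (C.vv_mem σ i)
  simpa using this

/-- Let `ω`, `e` be objects with `𝒢(ω,e) = {σ | d(σ) = ω, r(σ) = e}`
nonempty and the principal group `𝒢(ω) = 𝒢(ω,ω)` finite. Then `𝒢(ω,e)` is finite, and if
`r ∈ Z(R_ω)` satisfies `∑_{ρ ∈ 𝒢(ω)} γ_ρ(r) = 1_{R_ω}` then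
`∑_{σ ∈ 𝒢(ω,e)} γ_σ(r) = 1_{R_e}`. -/
theorem stmt19 {𝒢 : Type u} [Groupoid 𝒢] {R : Type v} [NonUnitalRing R]
    (g : GroupoidGrading 𝒢 R) (U : ObjectUnital g) (C : StrongChoice g U)
    (ω e : 𝒢) (hne : Nonempty (ω ⟶ e)) (hfin : Finite (ω ⟶ ω))
    (r : R) (hr : memZRe g ω r)
    (htr : ∑ᶠ ρ : ω ⟶ ω, C.gam ρ r = U.one ω) :
    Finite (ω ⟶ e) ∧ ∑ᶠ σ : ω ⟶ e, C.gam σ r = U.one e := by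
  obtain ⟨τ⟩ := hne
  haveI : Fintype (ω ⟶ ω) := Fintype.ofFinite _
  let equ : (ω ⟶ ω) ≃ (ω ⟶ e) :=
    { toFun := fun ρ => ρ ≫ τ
      invFun := fun σ => σ ≫ Groupoid.inv τ
      left_inv := fun ρ => by simp
      right_inv := fun σ => by simp }
  haveI : Finite (ω ⟶ e) := Finite.of_equiv _ equ
  refine ⟨inferInstance, ?_⟩
  haveI : Fintype (ω ⟶ e) := Fintype.ofFinite _
  rw [finsum_eq_sum_of_fintype] at htr ⊢
  rw [← Equiv.sum_comp equ (fun σ => C.gam σ r)]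
  have hgam : ∀ ρ : ω ⟶ ω, C.gam (ρ ≫ τ) r =
      ∑ p ∈ Finset.range (C.n τ) ×ˢ Finset.range (C.n ρ),
        (C.uu τ p.1 * C.uu ρ p.2) * r * (C.vv ρ p.2 * C.vv τ p.1) := by
    intro ρ
    refine (indep_gam C (ρ ≫ τ) _ _ _ ?_ ?_ ?_ r hr).symm
    · intro p _
      exact g.mul_mem τ ρ _ (C.uu_mem τ p.1) _ (C.uu_mem ρ p.2)
    · intro p _
      have := g.mul_mem (Groupoid.inv ρ) (Groupoid.inv τ) _ (C.vv_mem ρ p.2) _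
        (C.vv_mem τ p.1)
      have hinv : Groupoid.inv (ρ ≫ τ) = Groupoid.inv τ ≫ Groupoid.inv ρ := by
        simp [Groupoid.inv_eq_inv]
      rw [hinv]
      exact this
    · rw [Finset.sum_product]
      have hinner : ∀ i ∈ Finset.range (C.n τ),
          ∑ j ∈ Finset.range (C.n ρ), (C.uu τ i * C.uu ρ j) * (C.vv ρ j * C.vv τ i)
            = C.uu τ i * C.vv τ i := by
        intro i _
        have : ∑ j ∈ Finset.range (C.n ρ), (C.uu τ i * C.uu ρ j) * (C.vv ρ j * C.vv τ i)
            = (C.uu τ i * (∑ j ∈ Finset.range (C.n ρ), C.uu ρ j * C.vv ρ j)) * C.vv τ i := by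
          rw [Finset.mul_sum, Finset.sum_mul]
          exact Finset.sum_congr rfl fun j _ => by simp [mul_assoc]
        rw [this, C.sum_eq ρ, U.mul_one τ _ (C.uu_mem τ i)]
      rw [Finset.sum_congr rfl hinner, C.sum_eq τ]
  have step : ∀ ρ : ω ⟶ ω, C.gam (equ ρ) r =
      ∑ i ∈ Finset.range (C.n τ), C.uu τ i * C.gam ρ r * C.vv τ i := by
    intro ρ
    show C.gam (ρ ≫ τ) r = _
    rw [hgam ρ, Finset.sum_product]
    refine Finset.sum_congr rfl fun i _ => ?_
    unfold StrongChoice.gam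
    rw [Finset.mul_sum, Finset.sum_mul]
    exact Finset.sum_congr rfl fun j _ => by simp [mul_assoc]
  calc ∑ ρ : ω ⟶ ω, C.gam (equ ρ) r
      = ∑ ρ : ω ⟶ ω, ∑ i ∈ Finset.range (C.n τ), C.uu τ i * C.gam ρ r * C.vv τ i := by
        exact Finset.sum_congr rfl fun ρ _ => step ρ
    _ = ∑ i ∈ Finset.range (C.n τ),
        C.uu τ i * (∑ ρ : ω ⟶ ω, C.gam ρ r) * C.vv τ i := by
        rw [Finset.sum_comm]
        refine Finset.sum_congr rfl fun i _ => ?_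
        rw [Finset.mul_sum, Finset.sum_mul]
    _ = ∑ i ∈ Finset.range (C.n τ), C.uu τ i * C.vv τ i := by
        refine Finset.sum_congr rfl fun i _ => ?_
        rw [htr, U.mul_one τ _ (C.uu_mem τ i)]
    _ = U.one e := C.sum_eq τ
end
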